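/- arXiv:1612.09361 — 2 statements merged into one kernel-verified Lean document; each statement's English description precedes it below -/
import Mathlib

section
/- Let A₀ ∈ SL(2,ℝ) and for x ∈ ℝ/ℤ let R_x denote rotation by angle x. If k ≥ 4 is an integer and f(x) = kx mod 1, then there is no continuous map ξ : ℝ/ℤ → ℝP¹ satisfying ξ(f(x)) = A₀ R_x · ξ(x) for every x, where matrices act projectively. (Degree obstruction: such a ξ would have to satisfy k·deg(ξ) = deg(ξ) + 2.) -/
open Matrix MeasureTheory Set Filter Topology
open scoped ENNReal NNReal

noncomputable section

abbrev E2 := EuclideanSpace ℝ (Fin 2)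
abbrev SL2 := Matrix.SpecialLinearGroup (Fin 2) ℝ

/-- The real projective line, with the quotient topology. -/
abbrev RP1 := Projectivization ℝ E2

instance : TopologicalSpace RP1 :=
  inferInstanceAs (TopologicalSpace (Quotient (projectivizationSetoid ℝ E2)))
instance : MeasurableSpace RP1 := borel _
instance : BorelSpace RP1 := ⟨rfl⟩

/-- An element of `SL(2,ℝ)` as a continuous linear operator of Euclidean `ℝ²`. -/
def sl2CLM (A : SL2) : E2 →L[ℝ] E2 :=
  Matrix.toEuclideanCLM (𝕜 := ℝ) (A : Matrix (Fin 2) (Fin 2) ℝ)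

theorem sl2CLM_injective (A : SL2) : Function.Injective (sl2CLM A) := by
  intro v w hvw
  have h2 := congrArg (sl2CLM A⁻¹) hvw
  simp only [sl2CLM] at h2
  rw [← ContinuousLinearMap.comp_apply, ← ContinuousLinearMap.comp_apply,
    ← ContinuousLinearMap.mul_def, ← _root_.map_mul] at h2
  have h3 : ((A⁻¹ : SL2) : Matrix (Fin 2) (Fin 2) ℝ) * (A : Matrix (Fin 2) (Fin 2) ℝ) = 1 := by
    rw [← Matrix.SpecialLinearGroup.coe_mul, inv_mul_cancel, Matrix.SpecialLinearGroup.coe_one]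
  rw [h3] at h2
  simpa using h2

/-- Projective action of `SL(2,ℝ)` on the real projective line. -/
def projAction (A : SL2) : RP1 → RP1 :=
  Projectivization.map ((sl2CLM A) : E2 →ₗ[ℝ] E2) (sl2CLM_injective A)

/-- The rotation by angle `x` (i.e. by `2πx` radians), as an element of `SL(2,ℝ)`. -/
def RotSL (x : ℝ) : SL2 :=
  ⟨!![Real.cos (2 * Real.pi * x), -Real.sin (2 * Real.pi * x);
      Real.sin (2 * Real.pi * x),  Real.cos (2 * Real.pi * x)], by
    simp [Matrix.det_fin_two_of]
    nlinarith [Real.sin_sq_add_cos_sq (2 * Real.pi * x)]⟩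

/-!
Identify `ℝP¹` with the circle by `Φ [v] = z / z̄`, `z = v₀ + v₁ i`. This doubles angles, so `R_x`
becomes multiplication by `𝐞 (2x)`, and `A₀` becomes a circle homeomorphism `φ`, whose degree
`m` is `±1` because degrees multiply under composition. Lift `g = Φ ∘ ξ` and `φ` through
`𝐞 : ℝ → S¹`: periodicity gives integer degrees, `G (x + 1) = G x + d` and `H (t + 1) = H t + m`.
By uniqueness of lifts, the two sides of `g (k x) = φ (𝐞 (2x) g x)` have lifts differing by a
constant; comparing them at `x = 0` and `x = 1` gives `k d = (d + 2) m`, which has no integer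
solution when `k ≥ 4` and `m = ±1`.
-/

open Real FourierTransform ComplexConjugate

theorem isCoveringMap_fourierChar : IsCoveringMap (𝐞 : ℝ → Circle) :=
  Circle.isCoveringMap_exp.comp_homeomorph (Homeomorph.mulLeft₀ (2 * π) (by positivity))

theorem fourierChar_eq_fourierChar_iff {x y : ℝ} : 𝐞 x = 𝐞 y ↔ ∃ n : ℤ, x = y + n := by
  simp only [fourierChar_apply', Circle.exp_eq_exp]
  refine exists_congr fun n => ?_
  constructor
  · intro h; nlinarith [pi_pos]
  · intro h; rw [h]; ring

theorem fourierChar_surjective : Function.Surjective (𝐞 : ℝ → Circle) :=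
  Circle.exp_surjective.comp (mul_left_surjective₀ (by positivity : 2 * π ≠ 0))

theorem fourierChar_add_intCast (x : ℝ) (n : ℤ) : 𝐞 (x + n) = 𝐞 x :=
  fourierChar_eq_fourierChar_iff.2 ⟨n, rfl⟩

section Lifts

variable {X : Type*} [TopologicalSpace X]

theorem exists_continuous_fourierChar_lift [SimplyConnectedSpace X] [LocallyPathConnectedSpace X]
    {f : X → Circle} (hf : Continuous f) : ∃ F : X → ℝ, Continuous F ∧ ∀ x, 𝐞 (F x) = f x := by
  obtain ⟨x₀⟩ := (inferInstance : Nonempty X)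
  obtain ⟨t, ht⟩ := fourierChar_surjective (f x₀)
  obtain ⟨F, ⟨-, hF⟩, -⟩ :=
    isCoveringMap_fourierChar.existsUnique_continuousMap_lifts ⟨f, hf⟩ x₀ t ht
  exact ⟨F, F.continuous, congrFun hF⟩

theorem exists_intCast_add_of_fourierChar_comp_eq [PreconnectedSpace X] {F₁ F₂ : X → ℝ}
    (h₁ : Continuous F₁) (h₂ : Continuous F₂) (he : ∀ x, 𝐞 (F₁ x) = 𝐞 (F₂ x)) :
    ∃ n : ℤ, ∀ x, F₁ x = F₂ x + n := by
  cases isEmpty_or_nonempty X with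
  | inl _ => exact ⟨0, isEmptyElim⟩
  | inr hX =>
    obtain ⟨x₀⟩ := hX
    obtain ⟨n, hn⟩ := fourierChar_eq_fourierChar_iff.1 (he x₀)
    refine ⟨n, congrFun (isCoveringMap_fourierChar.eq_of_comp_eq h₁ (by fun_prop) ?_ x₀ hn)⟩
    funext x
    simp [he, fourierChar_add_intCast]

end Lifts

structure IsDegreeLift (g : ℝ → Circle) (d : ℤ) (G : ℝ → ℝ) : Prop where
  continuous : Continuous G
  lifts : ∀ x, 𝐞 (G x) = g x
  add_one : ∀ x, G (x + 1) = G x + d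

theorem exists_isDegreeLift_of_periodic {g : ℝ → Circle} (hg : Continuous g)
    (hper : Function.Periodic g 1) : ∃ d G, IsDegreeLift g d G := by
  obtain ⟨G, hGc, hG⟩ := exists_continuous_fourierChar_lift hg
  obtain ⟨d, hd⟩ := exists_intCast_add_of_fourierChar_comp_eq (F₁ := fun x => G (x + 1))
    (by fun_prop) hGc fun x => by simp only [hG, hper x]
  exact ⟨d, G, hGc, hG, hd⟩

theorem exists_isDegreeLift_comp_fourierChar {h : Circle → Circle} (hh : Continuous h) :
    ∃ m H, IsDegreeLift (h ∘ 𝐞) m H :=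
  exists_isDegreeLift_of_periodic (by fun_prop) fun x => by
    simpa using congrArg h (fourierChar_add_intCast x 1)

namespace IsDegreeLift

variable {g : ℝ → Circle} {d : ℤ} {G : ℝ → ℝ}

theorem add_intCast (hG : IsDegreeLift g d G) (x : ℝ) (n : ℤ) : G (x + n) = G x + n * d := by
  have hper : Function.Periodic (fun x => G x - d * x) 1 := fun x => by
    simp only [hG.add_one]; ring
  have := hper.int_mul n x
  simp only [mul_one] at this
  linarith

theorem mul_eq_one_of_leftInverse {h h' : Circle → Circle} (hinv : Function.LeftInverse h' h)
    {m m' : ℤ} {H H' : ℝ → ℝ} (hH : IsDegreeLift (h ∘ 𝐞) m H)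
    (hH' : IsDegreeLift (h' ∘ 𝐞) m' H') : m * m' = 1 := by
  obtain ⟨c, hc⟩ := exists_intCast_add_of_fourierChar_comp_eq (F₁ := H' ∘ H) (F₂ := id)
    (hH'.continuous.comp hH.continuous) continuous_id fun t => by
      simp only [Function.comp_apply, hH'.lifts, hH.lifts, hinv _, id]
  have h1 := hc 1
  have h0 := hc 0
  simp only [Function.comp_apply, id] at h1 h0
  have hH1 : H 1 = H 0 + m := by simpa using hH.add_one 0
  rw [hH1, hH'.add_intCast] at h1
  have : ((m * m' : ℤ) : ℝ) = 1 := by push_cast; linarith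
  exact_mod_cast this

end IsDegreeLift

theorem Homeomorph.exists_isDegreeLift (φ : Circle ≃ₜ Circle) :
    ∃ m H, (m = 1 ∨ m = -1) ∧ IsDegreeLift (φ ∘ 𝐞) m H := by
  obtain ⟨m, H, hH⟩ := exists_isDegreeLift_comp_fourierChar φ.continuous
  obtain ⟨m', H', hH'⟩ := exists_isDegreeLift_comp_fourierChar φ.symm.continuous
  exact ⟨m, H, Int.eq_one_or_neg_one_of_mul_eq_one
    (hH.mul_eq_one_of_leftInverse φ.left_inv hH'), hH⟩

theorem IsDegreeLift.natCast_mul_eq {g : ℝ → Circle} {φ : Circle → Circle} {k : ℕ} {r d m : ℤ}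
    {G H : ℝ → ℝ} (hG : IsDegreeLift g d G) (hH : IsDegreeLift (φ ∘ 𝐞) m H)
    (hfun : ∀ x, g (k * x) = φ (𝐞 (r * x) * g x)) : k * d = (d + r) * m := by
  obtain ⟨c, hc⟩ := exists_intCast_add_of_fourierChar_comp_eq
    (F₁ := fun x => G (k * x)) (F₂ := fun x => H (r * x + G x))
    (by have := hG.continuous; fun_prop) (by have := hG.continuous; have := hH.continuous; fun_prop)
    fun x => by
      rw [hG.lifts, hfun, hH.lifts, Function.comp_apply, AddChar.map_add_eq_mul, hG.lifts]
  have h1 := hc 1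
  have h0 := hc 0
  have hGk : G k = G 0 + k * d := by simpa using hG.add_intCast 0 k
  have hG1 : G 1 = G 0 + d := by simpa using hG.add_one 0
  have hH1 : H (r + G 1) = H (G 0) + (d + r : ℤ) * m := by
    rw [hG1, ← hH.add_intCast]; push_cast; ring_nf
  simp only [mul_one, mul_zero, zero_add, hH1, hGk] at h1 h0
  have : ((k * d : ℤ) : ℝ) = (d + r) * m := by push_cast at h1 ⊢; linarith
  exact_mod_cast this

theorem natCast_mul_ne_add_two_mul {k : ℕ} (hk : 4 ≤ k) {d m : ℤ} (hm : m = 1 ∨ m = -1) :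
    (k : ℤ) * d ≠ (d + 2) * m := by
  have hk' : (4 : ℤ) ≤ k := by exact_mod_cast hk
  rcases hm with rfl | rfl <;> rcases (by omega : d ≤ -1 ∨ d = 0 ∨ 1 ≤ d) with hd | rfl | hd <;>
    intro h <;> nlinarith

theorem Homeomorph.not_forall_eq_mul_fourierChar (φ : Circle ≃ₜ Circle) {k : ℕ} (hk : 4 ≤ k)
    {g : ℝ → Circle} (hg : Continuous g) (hper : Function.Periodic g 1) :
    ¬ ∀ x, g (k * x) = φ (𝐞 (2 * x) * g x) := by
  intro hfun
  obtain ⟨d, G, hG⟩ := exists_isDegreeLift_of_periodic hg hper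
  obtain ⟨m, H, hm, hH⟩ := φ.exists_isDegreeLift
  exact natCast_mul_ne_add_two_mul hk hm (hG.natCast_mul_eq hH (r := 2) (by simpa using hfun))

theorem sl2CLM_mul (A B : SL2) : sl2CLM (A * B) = (sl2CLM A).comp (sl2CLM B) := by
  simp only [sl2CLM, Matrix.SpecialLinearGroup.coe_mul, map_mul]
  rfl

theorem projAction_mul (A B : SL2) (P : RP1) :
    projAction (A * B) P = projAction A (projAction B P) := by
  induction P using Projectivization.ind with | h v hv =>
  simp only [projAction, Projectivization.map_mk, sl2CLM_mul]
  rfl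

theorem projAction_one (P : RP1) : projAction 1 P = P := by
  induction P using Projectivization.ind with | h v hv =>
  simp [projAction, Projectivization.map_mk, sl2CLM]

theorem continuous_projAction (A : SL2) : Continuous (projAction A) := by
  unfold projAction Projectivization.map
  apply Continuous.quotient_map'
  exact ((sl2CLM A).continuous.comp continuous_subtype_val).subtype_mk _

def projActionHomeomorph (A : SL2) : RP1 ≃ₜ RP1 where
  toFun := projAction A
  invFun := projAction A⁻¹
  left_inv P := by rw [← projAction_mul, inv_mul_cancel, projAction_one]
  right_inv P := by rw [← projAction_mul, mul_inv_cancel, projAction_one]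
  continuous_toFun := continuous_projAction A
  continuous_invFun := continuous_projAction A⁻¹

def e2ToComplex : E2 ≃ₗᵢ[ℝ] ℂ := Complex.orthonormalBasisOneI.repr.symm

theorem e2ToComplex_apply (v : E2) : e2ToComplex v = v 0 + v 1 * Complex.I :=
  Complex.orthonormalBasisOneI_repr_symm_apply v

theorem norm_div_conj_eq_one {z : ℂ} (hz : z ≠ 0) : ‖z / conj z‖ = 1 := by
  rw [norm_div, RCLike.norm_conj, div_self (norm_ne_zero_iff.2 hz)]

def projToCircle : RP1 → Circle :=
  Projectivization.lift
    (fun v => ⟨e2ToComplex v / conj (e2ToComplex v),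
      mem_sphere_zero_iff_norm.2 (norm_div_conj_eq_one (by simpa using v.2))⟩)
    (by
      rintro ⟨v, hv⟩ ⟨w, hw⟩ t rfl
      have ht : (t : ℂ) ≠ 0 := by rintro h; simp_all
      ext1
      simp only [map_smul, Complex.real_smul, map_mul, Complex.conj_ofReal]
      exact mul_div_mul_left _ _ ht)

theorem coe_projToCircle_mk (v : E2) (hv : v ≠ 0) :
    (projToCircle (Projectivization.mk ℝ v hv) : ℂ) = e2ToComplex v / conj (e2ToComplex v) :=
  rfl

theorem continuous_projToCircle : Continuous projToCircle := by
  apply Continuous.quotient_lift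
  refine Continuous.subtype_mk ?_ _
  have hz : Continuous fun v : {v : E2 // v ≠ 0} => e2ToComplex v :=
    e2ToComplex.continuous.comp continuous_subtype_val
  exact hz.div (Complex.continuous_conj.comp hz) fun v => by simpa using v.2

theorem projToCircle_injective : Function.Injective projToCircle := by
  intro P Q hPQ
  induction P using Projectivization.ind with | h v hv =>
  induction Q using Projectivization.ind with | h w hw =>
  have hz : e2ToComplex v ≠ 0 := by simpa using hv
  have hw' : e2ToComplex w ≠ 0 := by simpa using hw
  have hreal : conj (e2ToComplex v / e2ToComplex w) = e2ToComplex v / e2ToComplex w := by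
    have := congrArg ((↑) : Circle → ℂ) hPQ
    rw [coe_projToCircle_mk, coe_projToCircle_mk, div_eq_div_iff (by simpa using hz)
      (by simpa using hw')] at this
    rw [map_div₀, div_eq_div_iff (by simpa using hw') hw']
    linear_combination -this
  obtain ⟨t, ht⟩ := Complex.conj_eq_iff_real.1 hreal
  rw [Projectivization.mk_eq_mk_iff']
  refine ⟨t, e2ToComplex.injective ?_⟩
  rw [map_smul, Complex.real_smul, ← ht, div_mul_cancel₀ _ hw']

theorem Circle.coe_div_conj (u : Circle) : (u : ℂ) / conj (u : ℂ) = (u ^ 2 : Circle) := by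
  rw [← Circle.coe_inv_eq_conj, Circle.coe_inv, div_inv_eq_mul, Circle.coe_pow, sq]

theorem projToCircle_mk_e2ToComplex_symm (u : Circle) :
    projToCircle (Projectivization.mk ℝ (e2ToComplex.symm u) (by simp)) = u ^ 2 := by
  ext1
  rw [coe_projToCircle_mk, LinearIsometryEquiv.apply_symm_apply, Circle.coe_div_conj]

theorem projToCircle_surjective : Function.Surjective projToCircle := by
  intro u
  obtain ⟨t, rfl⟩ := fourierChar_surjective u
  refine ⟨_, (projToCircle_mk_e2ToComplex_symm (𝐞 (t / 2))).trans ?_⟩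
  rw [sq, ← AddChar.map_add_eq_mul, add_halves]

instance : CompactSpace RP1 := by
  let ψ : Metric.sphere (0 : E2) 1 → RP1 :=
    fun v => Projectivization.mk ℝ v (ne_zero_of_mem_unit_sphere v)
  refine Function.Surjective.compactSpace (f := ψ) ?_ ?_
  · exact continuous_quot_mk.comp (continuous_subtype_val.subtype_mk _)
  · intro P
    induction P using Projectivization.ind with | h v hv =>
    refine ⟨⟨‖v‖⁻¹ • v, by simp [norm_smul, hv]⟩, ?_⟩
    exact (Projectivization.mk_eq_mk_iff' ℝ _ _ _ _).2 ⟨‖v‖⁻¹, rfl⟩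

def projToCircleHomeomorph : RP1 ≃ₜ Circle :=
  continuous_projToCircle.homeoOfEquivCompactToT2
    (f := Equiv.ofBijective _ ⟨projToCircle_injective, projToCircle_surjective⟩)

theorem e2ToComplex_sl2CLM_rotSL (x : ℝ) (v : E2) :
    e2ToComplex (sl2CLM (RotSL x) v) = 𝐞 x * e2ToComplex v := by
  have h := Matrix.ofLp_toEuclideanCLM (𝕜 := ℝ) (RotSL x : Matrix (Fin 2) (Fin 2) ℝ) v
  have he : (𝐞 x : ℂ) = Real.cos (2 * π * x) + Real.sin (2 * π * x) * Complex.I := by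
    rw [fourierChar_apply, Complex.exp_mul_I, ← Complex.ofReal_cos, ← Complex.ofReal_sin]
  simp only [e2ToComplex_apply, sl2CLM, he]
  rw [congrFun h 0, congrFun h 1]
  apply Complex.ext <;> simp [RotSL, Matrix.mulVec, dotProduct, Fin.sum_univ_two] <;> ring

theorem projToCircle_projAction_rotSL (x : ℝ) (P : RP1) :
    projToCircle (projAction (RotSL x) P) = 𝐞 (2 * x) * projToCircle P := by
  induction P using Projectivization.ind with | h v hv =>
  ext1
  rw [projAction, Projectivization.map_mk, Circle.coe_mul, coe_projToCircle_mk,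
    coe_projToCircle_mk, ContinuousLinearMap.coe_coe, e2ToComplex_sl2CLM_rotSL, map_mul,
    mul_div_mul_comm, Circle.coe_div_conj, two_mul, AddChar.map_add_eq_mul, sq]

/-- If `A₀ ∈ SL(2,ℝ)`, `k ≥ 4`, and `f(x) = kx mod 1`, then there is no
continuous map `ξ : ℝ/ℤ → ℝP¹` (modelled as a continuous `1`-periodic map on `ℝ`)
satisfying `ξ(f x) = A₀ R_x · ξ(x)` for all `x`. -/
theorem no_invariant_section (A₀ : SL2) (k : ℕ) (hk : 4 ≤ k) :
    ¬ ∃ ξ : ℝ → RP1, Continuous ξ ∧ (∀ x : ℝ, ξ (x + 1) = ξ x) ∧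
      (∀ x : ℝ, ξ ((k : ℝ) * x) = projAction (A₀ * RotSL x) (ξ x)) := by
  rintro ⟨ξ, hξ, hper, heq⟩
  let Φ := projToCircleHomeomorph
  refine (Φ.symm.trans ((projActionHomeomorph A₀).trans Φ)).not_forall_eq_mul_fourierChar hk
    (g := Φ ∘ ξ) (Φ.continuous.comp hξ) (fun x => by simp only [Function.comp_apply, hper]) ?_
  intro x
  have hrot : 𝐞 (2 * x) * Φ (ξ x) = Φ (projAction (RotSL x) (ξ x)) :=
    (projToCircle_projAction_rotSL x (ξ x)).symm
  rw [Function.comp_apply, Function.comp_apply, hrot, Homeomorph.trans_apply,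
    Homeomorph.symm_apply_apply, Homeomorph.trans_apply, heq, projAction_mul]
  rfl
end
end

section
/- In the setting of the previous statement, for each point x̂ = (x_{-n})_n of the natural extension M̂ of f, the sets D_n(x̂) = g^n({x_{-n}} × D) form a nested sequence of subsets of {x_0} × D whose fibers are balls of radius λⁿ; their intersection is a single point ι(x̂), and the resulting map ι : M̂ → M × D is injective, continuous, satisfies g ∘ ι = ι ∘ f̂, and g(ι(M̂)) = ι(M̂). -/
/-!
Write `g (x, v) = (f x, c x + λ v)` with `c = h / (2N)`, so `‖c‖ ≤ 1/2 < 1 - λ`. Along a backward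
orbit, `gⁿ (x_{-n}, w) = (x₀, Sₙ + λⁿ w)` with `Sₙ = ∑_{j<n} λʲ c(x_{-j-1})`, hence
`D_n(x̂) = {x₀} × ball(Sₙ, λⁿ)`. These balls are nested and all contain the sum `∑ λʲ c(x_{-j-1})`
of the series, which is therefore the fibre coordinate of `ι(x̂)`. Splitting off the first term of
the series gives `g ∘ ι = ι ∘ f̂`; as `f̂` is onto, `g(ι(M̂)) = ι(M̂)`. Since `g` is injective on
`M × D`, `ι(x̂)` determines `ι` of the shifted-back point, and `ι` is injective by induction.
-/

open MeasureTheory Set Filter Topology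

/-- The natural extension (inverse limit) of `f : M → M`: sequences `(x_{-n})_{n ≥ 0}` with
`f(x_{-(n+1)}) = x_{-n}`, where `x n` records `x_{-n}`. -/
def NatExt {M : Type*} (f : M → M) : Type _ := {x : ℕ → M // ∀ n, f (x (n + 1)) = x n}

/-- The shift map `f̂` on the natural extension: `(…, x_{-1}, x_0) ↦ (…, x_{-1}, x_0, f(x_0))`. -/
def natExtShift {M : Type*} (f : M → M) : NatExt f → NatExt f := fun x =>
  ⟨fun n => Nat.rec (f (x.1 0)) (fun k _ => x.1 k) n, by
    intro n
    cases n with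
    | zero => rfl
    | succ k => exact x.2 k⟩

/-- The canonical projection `π : M̂ → M`, `xh ↦ x_0`. -/
def natExtProj {M : Type*} (f : M → M) : NatExt f → M := fun x => x.1 0

instance {M : Type*} [TopologicalSpace M] (f : M → M) : TopologicalSpace (NatExt f) :=
  inferInstanceAs (TopologicalSpace {x : ℕ → M // ∀ n, f (x (n + 1)) = x n})

instance {M : Type*} [MeasurableSpace M] (f : M → M) : MeasurableSpace (NatExt f) :=
  inferInstanceAs (MeasurableSpace {x : ℕ → M // ∀ n, f (x (n + 1)) = x n})

open Metric

lemma EuclideanSpace.norm_le_card_of_abs_le_one {ι : Type*} [Fintype ι]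
    (v : EuclideanSpace ℝ ι) (hv : ∀ i, |v i| ≤ 1) : ‖v‖ ≤ Fintype.card ι := by
  have hsq : ‖v‖ ^ 2 ≤ Fintype.card ι := by
    rw [EuclideanSpace.norm_sq_eq]
    calc ∑ i, ‖v i‖ ^ 2 ≤ ∑ _i : ι, (1 : ℝ) := by
          gcongr with i
          exact pow_le_one₀ (norm_nonneg _) (hv i)
      _ = Fintype.card ι := by simp
  have hcard : (Fintype.card ι : ℝ) ≤ (Fintype.card ι : ℝ) ^ 2 := by
    norm_cast; exact Nat.le_self_pow two_ne_zero _
  exact (pow_le_pow_iff_left₀ (norm_nonneg v) (Nat.cast_nonneg _) two_ne_zero).1 (hsq.trans hcard)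

lemma iInter_ball_eq_singleton {X : Type*} [MetricSpace X] {s : ℕ → X} {r : ℕ → ℝ} {v : X}
    (hv : ∀ n, v ∈ ball (s n) (r n)) (hr : Tendsto r atTop (𝓝 0)) :
    ⋂ n, ball (s n) (r n) = {v} := by
  ext w
  refine ⟨fun hw => ?_, fun hw => hw ▸ mem_iInter.2 hv⟩
  have hdist : ∀ n, dist w v ≤ 2 * r n := fun n => by
    have := dist_triangle_right w v (s n)
    linarith [mem_ball.1 (mem_iInter.1 hw n), mem_ball.1 (hv n)]
  have hlim : Tendsto (fun n => 2 * r n) atTop (𝓝 0) := by simpa using hr.const_mul 2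
  exact dist_le_zero.1 (ge_of_tendsto' hlim hdist)

section GeometricSeries

variable {E : Type*} [NormedAddCommGroup E] [NormedSpace ℝ E] {lam C : ℝ} {a : ℕ → E}

lemma norm_pow_smul_le (h0 : 0 ≤ lam) (ha : ∀ j, ‖a j‖ ≤ C) (j : ℕ) :
    ‖lam ^ j • a j‖ ≤ lam ^ j * C := by
  rw [norm_smul, norm_pow, Real.norm_of_nonneg h0]
  exact mul_le_mul_of_nonneg_left (ha j) (pow_nonneg h0 j)

lemma summable_pow_smul_of_norm_le [CompleteSpace E] (h0 : 0 ≤ lam) (h1 : lam < 1)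
    (ha : ∀ j, ‖a j‖ ≤ C) : Summable fun j => lam ^ j • a j :=
  .of_norm_bounded ((summable_geometric_of_lt_one h0 h1).mul_right C) (norm_pow_smul_le h0 ha)

lemma norm_tsum_pow_smul_lt_one (h0 : 0 ≤ lam) (ha : ∀ j, ‖a j‖ ≤ C) (hC : C < 1 - lam) :
    ‖∑' j, lam ^ j • a j‖ < 1 := by
  have h1 : 0 < 1 - lam := by linarith [(norm_nonneg (a 0)).trans (ha 0)]
  calc ‖∑' j, lam ^ j • a j‖ ≤ (1 - lam)⁻¹ * C :=
        tsum_of_norm_bounded ((hasSum_geometric_of_lt_one h0 (by linarith)).mul_right C)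
          (norm_pow_smul_le h0 ha)
    _ < 1 := by rwa [inv_mul_lt_iff₀ h1, mul_one]

variable [CompleteSpace E]

lemma tsum_pow_smul_sub_sum_range (h0 : 0 ≤ lam) (h1 : lam < 1) (ha : ∀ j, ‖a j‖ ≤ C) (n : ℕ) :
    ∑' j, lam ^ j • a j - ∑ j ∈ Finset.range n, lam ^ j • a j
      = lam ^ n • ∑' j, lam ^ j • a (j + n) := by
  rw [← (summable_pow_smul_of_norm_le h0 h1 ha).sum_add_tsum_nat_add n, add_sub_cancel_left,
    ← tsum_const_smul'']
  simp only [smul_smul, ← pow_add, add_comm n]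

lemma norm_tsum_pow_smul_sub_sum_range_lt (h0 : 0 < lam) (ha : ∀ j, ‖a j‖ ≤ C)
    (hC : C < 1 - lam) (n : ℕ) :
    ‖∑' j, lam ^ j • a j - ∑ j ∈ Finset.range n, lam ^ j • a j‖ < lam ^ n := by
  have h1 : lam < 1 := by linarith [(norm_nonneg (a 0)).trans (ha 0)]
  rw [tsum_pow_smul_sub_sum_range h0.le h1 ha, norm_smul, norm_pow, Real.norm_of_nonneg h0.le]
  exact mul_lt_of_lt_one_right (pow_pos h0 n)
    (norm_tsum_pow_smul_lt_one h0.le (fun j => ha (j + n)) hC)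

lemma tsum_pow_smul_eq_add (h0 : 0 ≤ lam) (h1 : lam < 1) (ha : ∀ j, ‖a j‖ ≤ C) :
    ∑' j, lam ^ j • a j = a 0 + lam • ∑' j, lam ^ j • a (j + 1) := by
  rw [(summable_pow_smul_of_norm_le h0 h1 ha).tsum_eq_zero_add, ← tsum_const_smul'']
  simp only [pow_zero, one_smul, smul_smul, ← pow_succ']

end GeometricSeries

section NaturalExtension

variable {M : Type*} {f : M → M}

def natExtTail (f : M → M) (x : NatExt f) : NatExt f :=
  ⟨fun n => x.1 (n + 1), fun n => x.2 (n + 1)⟩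

lemma natExtShift_natExtTail (x : NatExt f) : natExtShift f (natExtTail f x) = x :=
  Subtype.ext <| funext fun n => by cases n <;> first | exact x.2 0 | rfl

lemma natExtShift_surjective : Function.Surjective (natExtShift f) :=
  fun x => ⟨natExtTail f x, natExtShift_natExtTail x⟩

end NaturalExtension

section SkewProduct

variable {M E : Type*} [NormedAddCommGroup E] [NormedSpace ℝ E] {f : M → M} {c : M → E}
  {lam C : ℝ}

def skewProduct (f : M → M) (c : M → E) (lam : ℝ) (p : M × E) : M × E :=
  (f p.1, c p.1 + lam • p.2)

noncomputable def partialFiberPoint (c : M → E) (lam : ℝ) (x : NatExt f) (n : ℕ) : E :=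
  ∑ j ∈ Finset.range n, lam ^ j • c (x.1 (j + 1))

noncomputable def fiberPoint (c : M → E) (lam : ℝ) (x : NatExt f) : E :=
  ∑' j, lam ^ j • c (x.1 (j + 1))

/-- The map `ι : M̂ → M × E`. -/
noncomputable def realization (c : M → E) (lam : ℝ) (x : NatExt f) : M × E :=
  (x.1 0, fiberPoint c lam x)

lemma partialFiberPoint_succ (x : NatExt f) (n : ℕ) :
    partialFiberPoint c lam x (n + 1) = partialFiberPoint c lam x n + lam ^ n • c (x.1 (n + 1)) :=
  Finset.sum_range_succ _ _

lemma iterate_skewProduct_apply (x : NatExt f) (n : ℕ) (w : E) :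
    (skewProduct f c lam)^[n] (x.1 n, w) = (x.1 0, partialFiberPoint c lam x n + lam ^ n • w) := by
  induction n generalizing w with
  | zero => simp [partialFiberPoint]
  | succ n ih =>
    rw [Function.iterate_succ_apply, skewProduct, x.2 n, ih,
      partialFiberPoint_succ, smul_add, smul_smul, ← pow_succ, add_assoc]

lemma image_iterate_skewProduct (hlam : 0 < lam) (x : NatExt f) (n : ℕ) :
    (skewProduct f c lam)^[n] '' ({x.1 n} ×ˢ ball 0 1)
      = {x.1 0} ×ˢ ball (partialFiberPoint c lam x n) (lam ^ n) := by
  rw [Set.singleton_prod, Set.singleton_prod, Set.image_image,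
    ← affinity_unitBall (pow_pos hlam n), ← Set.image_smul, ← Set.image_vadd, Set.image_image,
    Set.image_image]
  simp only [iterate_skewProduct_apply, vadd_eq_add]

lemma antitone_ball_partialFiberPoint (h0 : 0 ≤ lam) (hc : ∀ m, ‖c m‖ ≤ C)
    (hC : C ≤ 1 - lam) (x : NatExt f) :
    Antitone fun n => ball (partialFiberPoint c lam x n) (lam ^ n) := by
  refine antitone_nat_of_succ_le fun n => ball_subset_ball' ?_
  rw [partialFiberPoint_succ, dist_self_add_left, pow_succ]
  nlinarith [norm_pow_smul_le h0 (fun j => hc (x.1 (j + 1))) n, pow_nonneg h0 n]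

/-- A collision with distinct base points would have to bridge the separation `2 λ` of `c` on
fibres of `f` with `λ` times a vector of norm `< 2`. -/
lemma skewProduct_injOn (hlam : 0 < lam)
    (hsep : ∀ x y, x ≠ y → f x = f y → 2 * lam ≤ ‖c x - c y‖) :
    Set.InjOn (skewProduct f c lam) (Set.univ ×ˢ ball 0 1) := by
  rintro ⟨p, v⟩ ⟨-, hv⟩ ⟨q, w⟩ ⟨-, hw⟩ he
  simp only [skewProduct, Prod.mk.injEq] at he hv hw
  obtain ⟨hfpq, hvw⟩ := he
  have hcdiff : c p - c q = lam • (w - v) := by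
    rw [smul_sub, sub_eq_sub_iff_add_eq_add, hvw, add_comm]
  have hpq : p = q := by
    by_contra hne
    have hsmall : ‖w - v‖ < 2 := by
      linarith [norm_sub_le w v, mem_ball_zero_iff.1 hv, mem_ball_zero_iff.1 hw]
    have := hsep p q hne hfpq
    rw [hcdiff, norm_smul, Real.norm_of_nonneg hlam.le] at this
    nlinarith
  subst hpq
  exact Prod.ext rfl (smul_right_injective E hlam.ne' (add_left_cancel hvw))

variable [CompleteSpace E]

lemma fiberPoint_mem_ball (hlam : 0 < lam) (hc : ∀ m, ‖c m‖ ≤ C) (hC : C < 1 - lam)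
    (x : NatExt f) (n : ℕ) :
    fiberPoint c lam x ∈ ball (partialFiberPoint c lam x n) (lam ^ n) := by
  rw [mem_ball, dist_eq_norm]
  exact norm_tsum_pow_smul_sub_sum_range_lt hlam (fun j => hc _) hC n

lemma norm_fiberPoint_lt_one (hlam : 0 < lam) (hc : ∀ m, ‖c m‖ ≤ C) (hC : C < 1 - lam)
    (x : NatExt f) : ‖fiberPoint c lam x‖ < 1 := by
  simpa [partialFiberPoint] using fiberPoint_mem_ball hlam hc hC x 0

lemma iInter_ball_partialFiberPoint (hlam : 0 < lam) (hc : ∀ m, ‖c m‖ ≤ C)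
    (hC : C < 1 - lam) (x : NatExt f) :
    ⋂ n, ball (partialFiberPoint c lam x n) (lam ^ n) = {fiberPoint c lam x} := by
  have hlam1 : lam < 1 := by linarith [(norm_nonneg _).trans (hc (x.1 0))]
  exact iInter_ball_eq_singleton (fiberPoint_mem_ball hlam hc hC x)
    (tendsto_pow_atTop_nhds_zero_of_lt_one hlam.le hlam1)

lemma skewProduct_realization (h0 : 0 ≤ lam) (h1 : lam < 1) (hc : ∀ m, ‖c m‖ ≤ C)
    (x : NatExt f) :
    skewProduct f c lam (realization c lam x) = realization c lam (natExtShift f x) :=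
  Prod.ext rfl (tsum_pow_smul_eq_add (a := fun j => c (x.1 j)) h0 h1 fun _ => hc _).symm

lemma image_skewProduct_range_realization (h0 : 0 ≤ lam) (h1 : lam < 1)
    (hc : ∀ m, ‖c m‖ ≤ C) :
    skewProduct f c lam '' Set.range (realization (f := f) c lam)
      = Set.range (realization (f := f) c lam) := by
  rw [← Set.range_comp, ← natExtShift_surjective.range_comp (realization c lam)]
  exact congrArg Set.range (funext (skewProduct_realization h0 h1 hc))

lemma realization_injective (hlam : 0 < lam) (hc : ∀ m, ‖c m‖ ≤ C) (hC : C < 1 - lam)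
    (hsep : ∀ x y, x ≠ y → f x = f y → 2 * lam ≤ ‖c x - c y‖) :
    Function.Injective (realization (f := f) c lam) := by
  have hmem : ∀ x : NatExt f, realization c lam x ∈ Set.univ ×ˢ ball 0 1 := fun x =>
    ⟨trivial, mem_ball_zero_iff.2 (norm_fiberPoint_lt_one hlam hc hC x)⟩
  suffices ∀ n (x y : NatExt f), realization c lam x = realization c lam y → x.1 n = y.1 n from
    fun x y hxy => Subtype.ext (funext fun n => this n x y hxy)
  intro n
  induction n with
  | zero => exact fun x y hxy => congrArg Prod.fst hxy
  | succ n ih =>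
    intro x y hxy
    have hlam1 : lam < 1 := by linarith [(norm_nonneg _).trans (hc (x.1 0))]
    refine ih (natExtTail f x) (natExtTail f y) (skewProduct_injOn hlam hsep (hmem _) (hmem _) ?_)
    rwa [skewProduct_realization hlam.le hlam1 hc, skewProduct_realization hlam.le hlam1 hc,
      natExtShift_natExtTail, natExtShift_natExtTail]

lemma continuous_realization [TopologicalSpace M] (hc : Continuous c) (h0 : 0 ≤ lam)
    (h1 : lam < 1) (hcb : ∀ m, ‖c m‖ ≤ C) : Continuous (realization (f := f) c lam) := by
  have hcoord : ∀ n, Continuous fun x : NatExt f => x.1 n := fun n =>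
    (continuous_apply n).comp continuous_subtype_val
  refine (hcoord 0).prodMk (continuous_tsum (fun j => ?_)
    ((summable_geometric_of_lt_one h0 h1).mul_right C)
    fun j x => norm_pow_smul_le h0 (fun i => hcb (x.1 (i + 1))) j)
  exact ((hc.comp (hcoord (j + 1))).const_smul _)

end SkewProduct

lemma norm_inv_two_card_smul_le_half {N : ℕ} (v : EuclideanSpace ℝ (Fin N))
    (hv : ∀ i, v i ∈ Set.Icc (0 : ℝ) 1) : ‖(2 * (N : ℝ))⁻¹ • v‖ ≤ 1 / 2 := by
  have hv' : ‖v‖ ≤ N := by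
    simpa using v.norm_le_card_of_abs_le_one fun i => abs_le.2 ⟨by linarith [(hv i).1], (hv i).2⟩
  rw [norm_smul, Real.norm_of_nonneg (by positivity)]
  rcases N.eq_zero_or_pos with rfl | hN
  · simp
  · calc (2 * (N : ℝ))⁻¹ * ‖v‖ ≤ (2 * (N : ℝ))⁻¹ * N := by gcongr
      _ = 1 / 2 := by field_simp

lemma two_mul_le_norm_inv_two_card_smul_sub {N : ℕ} {v w : EuclideanSpace ℝ (Fin N)}
    {δ lam : ℝ} (hvw : δ ≤ ‖v - w‖) (hlam : lam < δ / (4 * N)) :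
    2 * lam ≤ ‖(2 * (N : ℝ))⁻¹ • v - (2 * (N : ℝ))⁻¹ • w‖ := by
  have hδ : δ / (2 * N) ≤ ‖(2 * (N : ℝ))⁻¹ • v - (2 * (N : ℝ))⁻¹ • w‖ := by
    rw [← smul_sub, norm_smul, Real.norm_of_nonneg (by positivity), div_eq_inv_mul]
    exact mul_le_mul_of_nonneg_left hvw (by positivity)
  linarith [show δ / (2 * N) = 2 * (δ / (4 * N)) by ring]

theorem natExt_smooth_realization_general {N : ℕ}
    {M : Type*} [MetricSpace M]
    (f : M → M)
    (h : M → EuclideanSpace ℝ (Fin N)) (hh : Continuous h)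
    (hrange : ∀ x i, h x i ∈ Set.Icc (0 : ℝ) 1)
    (δ : ℝ)
    (hsep : ∀ x y : M, x ≠ y → f x = f y → δ ≤ ‖h x - h y‖)
    (lam : ℝ) (hlam0 : 0 < lam) (hlam : lam < δ / (4 * N)) (hlam2 : lam < 1 / 2) :
    ∀ (g : M × EuclideanSpace ℝ (Fin N) → M × EuclideanSpace ℝ (Fin N)),
      (g = fun p => (f p.1, (2 * (N : ℝ))⁻¹ • h p.1 + lam • p.2)) →
      ∀ (D : Set (EuclideanSpace ℝ (Fin N))), D = ball 0 1 →
      ∃ ι : NatExt f → M × EuclideanSpace ℝ (Fin N),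
        Continuous ι ∧ Function.Injective ι ∧
        (∀ xh : NatExt f, g (ι xh) = ι (natExtShift f xh)) ∧
        (g '' Set.range ι = Set.range ι) ∧
        ∀ xh : NatExt f,
          -- the `D_n(xh)` are subsets of `{x₀} × D`, nested, with fibers balls of radius `λⁿ`:
          (∀ n : ℕ, g^[n] '' ((Set.singleton (xh.1 n)) ×ˢ D) ⊆ (Set.singleton (xh.1 0)) ×ˢ D) ∧
          (∀ n : ℕ, g^[n + 1] '' ((Set.singleton (xh.1 (n + 1))) ×ˢ D) ⊆ g^[n] '' ((Set.singleton (xh.1 n)) ×ˢ D)) ∧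
          (∀ n : ℕ, ∃ c : EuclideanSpace ℝ (Fin N),
            Prod.snd '' (g^[n] '' ((Set.singleton (xh.1 n)) ×ˢ D)) = ball c (lam ^ n)) ∧
          -- and their intersection is the single point `ι(xh)`:
          (⋂ n : ℕ, g^[n] '' ((Set.singleton (xh.1 n)) ×ˢ D)) = {ι xh} := by
  intro g hg D hD
  set c : M → EuclideanSpace ℝ (Fin N) := fun m => (2 * (N : ℝ))⁻¹ • h m
  obtain rfl : g = skewProduct f c lam := hg
  subst hD
  have hc : ∀ m, ‖c m‖ ≤ 1 / 2 := fun m => norm_inv_two_card_smul_le_half _ (hrange m)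
  have hC : (1 / 2 : ℝ) < 1 - lam := by linarith
  have hlam1 : lam < 1 := by linarith
  have hsep' : ∀ x y, x ≠ y → f x = f y → 2 * lam ≤ ‖c x - c y‖ := fun x y hne hfxy =>
    two_mul_le_norm_inv_two_card_smul_sub (hsep x y hne hfxy) hlam
  refine ⟨realization c lam, continuous_realization (by fun_prop) hlam0.le hlam1 hc,
    realization_injective hlam0 hc hC hsep', skewProduct_realization hlam0.le hlam1 hc,
    image_skewProduct_range_realization hlam0.le hlam1 hc, fun x => ?_⟩
  have hD : ∀ n, (skewProduct f c lam)^[n] '' (Set.singleton (x.1 n) ×ˢ ball 0 1)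
      = {x.1 0} ×ˢ ball (partialFiberPoint c lam x n) (lam ^ n) :=
    image_iterate_skewProduct hlam0 x
  have hanti := antitone_ball_partialFiberPoint hlam0.le hc hC.le x
  simp only [hD]
  refine ⟨fun n => Set.prod_mono subset_rfl ?_, fun n => Set.prod_mono subset_rfl (hanti n.le_succ),
    fun n => ⟨_, Set.snd_image_prod (Set.singleton_nonempty _) _⟩, ?_⟩
  · simpa [partialFiberPoint] using hanti n.zero_le
  · rw [← Set.prod_iInter, iInter_ball_partialFiberPoint hlam0 hc hC, Set.singleton_prod_singleton]
    rfl

/-- In the setting of the previous statement (with `λ ∈ (0, 1/2)`), for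
each point `xh = (x_{-n})_n` of the natural extension `M̂` of `f`, the sets
`D_n(xh) = gⁿ({x_{-n}} × D)` form a nested sequence of subsets of `{x_0} × D` whose fibers
are balls of radius `λⁿ`; their intersection is a single point `ι(xh)`, and the resulting
map `ι : M̂ → M × D` is injective, continuous, satisfies `g ∘ ι = ι ∘ f̂` and
`g(ι(M̂)) = ι(M̂)`. -/
theorem natExt_smooth_realization {N : ℕ} (hN : 0 < N)
    {M : Type*} [MetricSpace M] [CompactSpace M]
    (f : M → M) (hf : Continuous f)
    (hloc : ∀ x : M, ∃ U ∈ nhds x, Set.InjOn f U)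
    (h : M → EuclideanSpace ℝ (Fin N)) (hh : Continuous h)
    (hrange : ∀ x i, h x i ∈ Set.Icc (0 : ℝ) 1)
    (δ : ℝ) (hδ : 0 < δ)
    (hsep : ∀ x y : M, x ≠ y → f x = f y → δ ≤ ‖h x - h y‖)
    (lam : ℝ) (hlam0 : 0 < lam) (hlam : lam < δ / (4 * N)) (hlam2 : lam < 1 / 2) :
    ∀ (g : M × EuclideanSpace ℝ (Fin N) → M × EuclideanSpace ℝ (Fin N)),
      (g = fun p => (f p.1, (2 * (N : ℝ))⁻¹ • h p.1 + lam • p.2)) →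
      ∀ (D : Set (EuclideanSpace ℝ (Fin N))), D = ball 0 1 →
      ∃ ι : NatExt f → M × EuclideanSpace ℝ (Fin N),
        Continuous ι ∧ Function.Injective ι ∧
        (∀ xh : NatExt f, g (ι xh) = ι (natExtShift f xh)) ∧
        (g '' Set.range ι = Set.range ι) ∧
        ∀ xh : NatExt f,
          -- the `D_n(xh)` are subsets of `{x₀} × D`, nested, with fibers balls of radius `λⁿ`:
          (∀ n : ℕ, g^[n] '' ((Set.singleton (xh.1 n)) ×ˢ D) ⊆ (Set.singleton (xh.1 0)) ×ˢ D) ∧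
          (∀ n : ℕ, g^[n + 1] '' ((Set.singleton (xh.1 (n + 1))) ×ˢ D) ⊆ g^[n] '' ((Set.singleton (xh.1 n)) ×ˢ D)) ∧
          (∀ n : ℕ, ∃ c : EuclideanSpace ℝ (Fin N),
            Prod.snd '' (g^[n] '' ((Set.singleton (xh.1 n)) ×ˢ D)) = ball c (lam ^ n)) ∧
          -- and their intersection is the single point `ι(xh)`:
          (⋂ n : ℕ, g^[n] '' ((Set.singleton (xh.1 n)) ×ˢ D)) = {ι xh} :=
  natExt_smooth_realization_general f h hh hrange δ hsep lam hlam0 hlam hlam2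
end
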